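/- Differentiation formula for the second kind: (d/dx) D̂_n(x|a_1,…,a_r) = n! ∑_{l=0}^{n-1} ((-1)^{n-l-1}/(l!(n-l))) D̂_l(x|a_1,…,a_r). -/

import Mathlib

open Finset PowerSeries

/-- Exponential generating function: `∑ f n * t^n / n!`. -/
noncomputable def egf (f : ℕ → ℚ) : PowerSeries ℚ :=
  PowerSeries.mk fun n => f n / n.factorial

/-- The formal power series `log(1+t) = ∑_{m≥1} (-1)^{m-1} t^m / m`. -/
noncomputable def log1p : PowerSeries ℚ :=
  PowerSeries.mk fun n => if n = 0 then 0 else (-1) ^ (n - 1) / n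

/-- Formal exponential composition: for `f` with zero constant term this is
`exp(f) = ∑_k f^k / k!` (the sum in each coefficient is finite). -/
noncomputable def expPS (f : PowerSeries ℚ) : PowerSeries ℚ :=
  PowerSeries.mk fun n =>
    ∑ k ∈ Finset.range (n + 1), (PowerSeries.coeff n (f ^ k)) / k.factorial

/-- `(1+t)^a := exp(a · log(1+t))` as a formal power series. -/
noncomputable def onePow (a : ℚ) : PowerSeries ℚ := expPS (PowerSeries.C a * log1p)

/-- `e^{a t} = ∑ a^n t^n / n!`. -/
noncomputable def expAt (a : ℚ) : PowerSeries ℚ :=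
  PowerSeries.mk fun n => a ^ n / n.factorial

/-- Falling factorial `(x)_n = x(x-1)⋯(x-n+1)`. -/
noncomputable def ffall (x : ℚ) (n : ℕ) : ℚ := ∏ i ∈ Finset.range n, (x - i)

/-!
Clearing the denominators `∏ ((1+t)^{a_j} - 1)`, the generating function `∑ D̂_n(x) tⁿ/n!`
is `R(t) (1+t)^x` with `R` independent of `x`. All coefficients involved are polynomials
in `x`, so this identity lifts to power series over `ℚ[x]`, where `∂/∂x` acts coefficientwise,
commutes with multiplication by `x`-free series and sends `(1+t)^x` to `log(1+t) (1+t)^x`.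
Hence `∂/∂x` multiplies the generating function by `log(1+t)` (the denominator is a nonzero
series because every `a_j ≠ 0`), and comparing coefficients of `tⁿ` gives the formula.
-/

open scoped Polynomial Nat
open Polynomial (derivative evalRingHom)

namespace PowerSeries

section PolynomialCoefficients

variable {R : Type*} [CommSemiring R]

noncomputable def coeffDeriv (F : PowerSeries R[X]) : PowerSeries R[X] :=
  PowerSeries.mk fun n => Polynomial.derivative (coeff n F)

theorem coeffDeriv_map_C_mul (g : PowerSeries R) (F : PowerSeries R[X]) :
    coeffDeriv (map Polynomial.C g * F) = map Polynomial.C g * coeffDeriv F := by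
  ext n
  simp only [coeffDeriv, coeff_mk, coeff_mul, map_sum, coeff_map, Polynomial.derivative_C_mul]

theorem map_evalRingHom_map_C (x : R) (g : PowerSeries R) :
    map (evalRingHom x) (map Polynomial.C g) = g := by
  ext n
  simp

theorem coeff_pow_eq_zero_of_lt {f : PowerSeries R} (hf : constantCoeff f = 0) {m k : ℕ}
    (h : m < k) : coeff m (f ^ k) = 0 :=
  X_pow_dvd_iff.mp (pow_dvd_pow_of_dvd (X_dvd_iff.mpr hf) k) m h

end PolynomialCoefficients

theorem ext_of_map_evalRingHom {K : Type*} [CommRing K] [IsDomain K] [Infinite K]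
    {F G : PowerSeries K[X]} (h : ∀ x, map (evalRingHom x) F = map (evalRingHom x) G) :
    F = G :=
  ext fun n => Polynomial.funext fun x : K => by simpa using congrArg (coeff n) (h x)

end PowerSeries

theorem Polynomial.derivative_sum_C_div_factorial_mul_X_pow {K : Type*} [Field K] [CharZero K]
    (c : ℕ → K) (N : ℕ) :
    derivative (∑ k ∈ range (N + 1), C (c k / k !) * X ^ k) =
      ∑ k ∈ range N, C (c (k + 1) / k !) * X ^ k := by
  rw [derivative_sum, sum_range_succ']
  simp only [derivative_C_mul_X_pow, pow_zero, mul_one, derivative_C, add_zero,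
    Nat.add_sub_cancel]
  refine sum_congr rfl fun k _ => ?_
  rw [Nat.factorial_succ]
  push_cast
  field_simp

theorem coeff_expPS_of_le {f : PowerSeries ℚ} (hf : constantCoeff f = 0) {m N : ℕ} (h : m ≤ N) :
    coeff m (expPS f) = ∑ k ∈ range (N + 1), coeff m (f ^ k) / k ! := by
  rw [expPS, coeff_mk]
  refine sum_subset (range_subset_range.mpr (by omega)) fun k _ hk => ?_
  rw [coeff_pow_eq_zero_of_lt hf (by simpa using hk), zero_div]

theorem coeff_mul_expPS (g f : PowerSeries ℚ) (hf : constantCoeff f = 0) (n : ℕ) :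
    coeff n (g * expPS f) = ∑ k ∈ range (n + 1), coeff n (g * f ^ k) / k ! := by
  simp only [coeff_mul, sum_div]
  rw [← sum_comm]
  refine sum_congr rfl fun p hp => ?_
  rw [coeff_expPS_of_le hf (HasAntidiagonal.antidiagonal.snd_le hp), mul_sum]
  simp only [mul_div_assoc]

theorem coeff_log1p (n : ℕ) :
    coeff n log1p = if n = 0 then 0 else (-1 : ℚ) ^ (n - 1) / n :=
  coeff_mk _ _

theorem constantCoeff_log1p : constantCoeff log1p = 0 := by
  simp [← coeff_zero_eq_constantCoeff_apply, coeff_log1p]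

theorem constantCoeff_C_mul_log1p (x : ℚ) : constantCoeff (C x * log1p) = 0 := by
  simp [constantCoeff_log1p]

theorem coeff_one_onePow (x : ℚ) : coeff 1 (onePow x) = x := by
  simp [onePow, expPS, sum_range_succ, coeff_log1p]

theorem onePow_sub_one_ne_zero {x : ℚ} (hx : x ≠ 0) : onePow x - 1 ≠ 0 := by
  intro h
  simpa [coeff_one_onePow, hx] using congrArg (coeff 1) h

/-- `(1+t)^x` as a power series in `t` whose coefficients are polynomials in `x`. -/
noncomputable def onePowPoly : PowerSeries ℚ[X] :=
  PowerSeries.mk fun n =>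
    ∑ k ∈ range (n + 1), Polynomial.C (coeff n (log1p ^ k) / k !) * Polynomial.X ^ k

theorem map_evalRingHom_onePowPoly (x : ℚ) : map (evalRingHom x) onePowPoly = onePow x := by
  ext n
  simp only [onePowPoly, onePow, expPS, coeff_map, coeff_mk, map_sum, Polynomial.coe_evalRingHom,
    Polynomial.eval_mul, Polynomial.eval_C, Polynomial.eval_pow, Polynomial.eval_X, mul_pow,
    ← map_pow, coeff_C_mul]
  exact sum_congr rfl fun k _ => by ring

theorem coeffDeriv_onePowPoly : coeffDeriv onePowPoly = map Polynomial.C log1p * onePowPoly := by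
  refine PowerSeries.ext fun n => Polynomial.funext fun x => ?_
  have hRHS : (coeff n (map Polynomial.C log1p * onePowPoly)).eval x =
      coeff n (log1p * onePow x) := by
    have h : map (evalRingHom x) (map Polynomial.C log1p * onePowPoly) = log1p * onePow x := by
      rw [map_mul, map_evalRingHom_map_C, map_evalRingHom_onePowPoly]
    rw [← h, coeff_map, Polynomial.coe_evalRingHom]
  have hterm : ∀ k, log1p * (C x * log1p) ^ k = C (x ^ k) * log1p ^ (k + 1) := fun k => by
    rw [mul_pow, ← map_pow]; ring
  rw [hRHS, onePow, coeff_mul_expPS _ _ (constantCoeff_C_mul_log1p x), coeffDeriv, coeff_mk,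
    onePowPoly, coeff_mk,
    Polynomial.derivative_sum_C_div_factorial_mul_X_pow (fun k => coeff n (log1p ^ k))]
  simp only [hterm, coeff_C_mul]
  rw [sum_range_succ, coeff_pow_eq_zero_of_lt constantCoeff_log1p n.lt_succ_self]
  simp only [Polynomial.eval_finsetSum, Polynomial.eval_mul, Polynomial.eval_C,
    Polynomial.eval_pow, Polynomial.eval_X, mul_zero, zero_div, add_zero]
  exact sum_congr rfl fun k _ => by ring

noncomputable def egfPoly (P : ℕ → ℚ[X]) : PowerSeries ℚ[X] :=
  PowerSeries.mk fun n => Polynomial.C ((n ! : ℚ)⁻¹) * P n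

theorem map_evalRingHom_egfPoly (P : ℕ → ℚ[X]) (x : ℚ) :
    map (evalRingHom x) (egfPoly P) = egf fun n => (P n).eval x := by
  ext n
  simp [egfPoly, egf, div_eq_inv_mul]

theorem coeffDeriv_egfPoly (P : ℕ → ℚ[X]) :
    coeffDeriv (egfPoly P) = egfPoly fun n => derivative (P n) := by
  ext n
  simp [coeffDeriv, egfPoly]

theorem egfPoly_derivative_eq_mul_log1p {M R : PowerSeries ℚ} (hM : M ≠ 0) (P : ℕ → ℚ[X])
    (h : ∀ x : ℚ, M * egf (fun n => (P n).eval x) = R * onePow x) :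
    egfPoly (fun n => derivative (P n)) = egfPoly P * map Polynomial.C log1p := by
  have hC : map Polynomial.C M * egfPoly P = map Polynomial.C R * onePowPoly :=
    ext_of_map_evalRingHom fun x => by
      simp only [map_mul, map_evalRingHom_map_C, map_evalRingHom_egfPoly,
        map_evalRingHom_onePowPoly, h]
  have hM' : map Polynomial.C M ≠ 0 :=
    (map_ne_zero_iff _ (map_injective _ Polynomial.C_injective)).mpr hM
  apply mul_left_cancel₀ hM'
  calc map Polynomial.C M * egfPoly (fun n => derivative (P n))
      = coeffDeriv (map Polynomial.C R * onePowPoly) := by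
        rw [← hC, coeffDeriv_map_C_mul, coeffDeriv_egfPoly]
    _ = map Polynomial.C M * (egfPoly P * map Polynomial.C log1p) := by
        rw [coeffDeriv_map_C_mul, coeffDeriv_onePowPoly, mul_left_comm, ← hC]
        ring

theorem derivative_eq_sum_of_egfPoly_derivative {P : ℕ → ℚ[X]}
    (h : egfPoly (fun n => derivative (P n)) = egfPoly P * map Polynomial.C log1p) (n : ℕ) :
    derivative (P n) =
      ∑ l ∈ range n,
        Polynomial.C ((n ! : ℚ) * (-1) ^ (n - l - 1) / ((l ! : ℚ) * ((n - l : ℕ) : ℚ))) * P l := by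
  calc derivative (P n)
      = Polynomial.C (n ! : ℚ) * coeff n (egfPoly fun n => derivative (P n)) := by
        rw [egfPoly, coeff_mk, ← mul_assoc, ← map_mul, mul_inv_cancel₀ (by positivity), map_one,
          one_mul]
    _ = Polynomial.C (n ! : ℚ) *
          ∑ l ∈ range n, coeff l (egfPoly P) * Polynomial.C (coeff (n - l) log1p) := by
        rw [h, coeff_mul, Nat.sum_antidiagonal_eq_sum_range_succ_mk, sum_range_succ]
        simp only [coeff_map, coeff_log1p, tsub_self, ↓reduceIte, map_zero, mul_zero, add_zero]
    _ = _ := by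
        rw [mul_sum]
        refine sum_congr rfl fun l hl => ?_
        have hln : l < n := mem_range.mp hl
        rw [egfPoly, coeff_mk, coeff_log1p, if_neg (Nat.sub_ne_zero_of_lt hln), mul_right_comm,
          ← mul_assoc, ← map_mul, ← map_mul]
        congr 2
        field_simp

theorem stmt10 (r : ℕ) (a : Fin r → ℚ) (ha : ∀ j, a j ≠ 0) (Dh : ℕ → Polynomial ℚ)
    (hDh : ∀ x : ℚ, (∏ j, (onePow (a j) - 1)) * egf (fun n => (Dh n).eval x) = (∏ j, onePow (a j)) * log1p ^ r * onePow x)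
    (n : ℕ) :
    Polynomial.derivative (Dh n) =
      ∑ l ∈ Finset.range n,
        Polynomial.C ((n.factorial : ℚ) * (-1) ^ (n - l - 1) /
          ((l.factorial : ℚ) * ((n - l : ℕ) : ℚ))) * Dh l := by
  have hM : ∏ j, (onePow (a j) - 1) ≠ 0 :=
    prod_ne_zero_iff.mpr fun j _ => onePow_sub_one_ne_zero (ha j)
  exact derivative_eq_sum_of_egfPoly_derivative (egfPoly_derivative_eq_mul_log1p hM Dh hDh) n
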